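/- Let a > 0 and define h^±(t) = φ(t)(cosh(πt/a) ± i sinh(πt/a)) for t ∈ ℝ, where φ is the normalized Gaussian. Then there exists a nonzero constant c ∈ ℂ (depending only on a) such that the Bargmann transforms of h^± are given by B h^±(z) = c · (1 ∓ i + (1 ± i) e^{πz/a}) e^{-πz/(2a)} for all z ∈ ℂ. -/

import Mathlib

open MeasureTheory Complex

/-- The Bargmann transform of `f : ℝ → ℂ`:
`Bf(z) = 2^{1/4} ∫ f(t) e^{2πtz - πt² - (π/2)z²} dt`. -/
noncomputable def bargmannTransform (f : ℝ → ℂ) (z : ℂ) : ℂ :=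
  (((2 : ℝ) ^ ((1 : ℝ) / 4) : ℝ) : ℂ) *
    ∫ t : ℝ, f t * Complex.exp (2 * (Real.pi : ℂ) * (t : ℂ) * z -
      (Real.pi : ℂ) * (t : ℂ) ^ 2 - (Real.pi : ℂ) / 2 * z ^ 2)

/-- The normalized Gaussian `φ(t) = 2^{1/4} e^{-πt²}`. -/
noncomputable def normGaussian (t : ℝ) : ℂ :=
  (((2 : ℝ) ^ ((1 : ℝ) / 4) * Real.exp (-Real.pi * t ^ 2) : ℝ) : ℂ)

/-- `h⁺(t) = φ(t)(cosh(πt/a) + i sinh(πt/a))`. -/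
noncomputable def hPlus (a : ℝ) (t : ℝ) : ℂ :=
  normGaussian t *
    ((Real.cosh (Real.pi * t / a) : ℂ) + Complex.I * (Real.sinh (Real.pi * t / a) : ℂ))

/-- `h⁻(t) = φ(t)(cosh(πt/a) - i sinh(πt/a))`. -/
noncomputable def hMinus (a : ℝ) (t : ℝ) : ℂ :=
  normGaussian t *
    ((Real.cosh (Real.pi * t / a) : ℂ) - Complex.I * (Real.sinh (Real.pi * t / a) : ℂ))

/-! Writing `cosh x ± i sinh x = ((1 ± i) eˣ + (1 ∓ i) e⁻ˣ) / 2` reduces everything to the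
Bargmann transform of `φ(t) e^{bt}`. That is a Gaussian integral, equal to
`e^{bz/2 + b²/(8π)}` because the normalizations `2^{1/4} · 2^{1/4} · (1/2)^{1/2}` cancel.
With `b = ±π/a` this gives the claim with `c = e^{π/(8a²)} / 2`. -/

open Real

noncomputable def bargmannKernel (z : ℂ) (t : ℝ) : ℂ :=
  cexp (2 * (π : ℂ) * t * z - π * (t : ℂ) ^ 2 - π / 2 * z ^ 2)

lemma bargmannTransform_eq_integral (f : ℝ → ℂ) (z : ℂ) :
    bargmannTransform f z = ((2 ^ (1 / 4 : ℝ) : ℝ) : ℂ) * ∫ t, f t * bargmannKernel z t :=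
  rfl

lemma two_rpow_quarter_mul_self_mul_cpow_half_eq_one :
    ((2 ^ (1 / 4 : ℝ) : ℝ) : ℂ) * ((2 ^ (1 / 4 : ℝ) : ℝ) : ℂ) *
      ((π : ℂ) / (2 * π)) ^ (1 / 2 : ℂ) = 1 := by
  have hπ : (π : ℂ) ≠ 0 := ofReal_ne_zero.2 pi_ne_zero
  have half : (π : ℂ) / (2 * π) = ((2 ^ (-1 : ℝ) : ℝ) : ℂ) := by
    rw [rpow_neg_one]; push_cast; field_simp
  rw [half, show (1 / 2 : ℂ) = ((1 / 2 : ℝ) : ℂ) by push_cast; rfl,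
    ← ofReal_cpow (by positivity), ← rpow_mul zero_le_two, ← ofReal_mul, ← ofReal_mul,
    ← rpow_add two_pos, ← rpow_add two_pos]
  norm_num

lemma neg_two_mul_pi_re_neg : (-(2 * (π : ℂ))).re < 0 := by simp [pi_pos]

lemma normGaussian_mul_cexp_mul_bargmannKernel (b z : ℂ) (t : ℝ) :
    normGaussian t * cexp (b * t) * bargmannKernel z t =
      ((2 ^ (1 / 4 : ℝ) : ℝ) : ℂ) *
        cexp (-(2 * π) * (t : ℂ) ^ 2 + (2 * π * z + b) * t + -(π / 2 * z ^ 2)) := by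
  rw [normGaussian, bargmannKernel, ofReal_mul, ofReal_exp, mul_assoc, mul_assoc,
    ← Complex.exp_add, ← Complex.exp_add]
  push_cast
  congr 2
  ring

lemma integrable_normGaussian_mul_cexp_mul_bargmannKernel (b z : ℂ) :
    Integrable fun t => normGaussian t * cexp (b * t) * bargmannKernel z t := by
  simp only [normGaussian_mul_cexp_mul_bargmannKernel]
  exact (integrable_cexp_quadratic' neg_two_mul_pi_re_neg _ _).const_mul _

theorem bargmannTransform_normGaussian_mul_cexp (b z : ℂ) :
    bargmannTransform (fun t => normGaussian t * cexp (b * t)) z =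
      cexp (b * z / 2 + b ^ 2 / (8 * π)) := by
  have hπ : (π : ℂ) ≠ 0 := ofReal_ne_zero.2 pi_ne_zero
  simp only [bargmannTransform_eq_integral, normGaussian_mul_cexp_mul_bargmannKernel]
  rw [integral_const_mul, integral_cexp_quadratic neg_two_mul_pi_re_neg, neg_neg, ← mul_assoc,
    ← mul_assoc, two_rpow_quarter_mul_self_mul_cpow_half_eq_one, one_mul]
  congr 1
  field_simp
  ring

theorem bargmannTransform_add {f g : ℝ → ℂ} {z : ℂ}
    (hf : Integrable fun t => f t * bargmannKernel z t)
    (hg : Integrable fun t => g t * bargmannKernel z t) :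
    bargmannTransform (f + g) z = bargmannTransform f z + bargmannTransform g z := by
  simp only [bargmannTransform_eq_integral, Pi.add_apply, add_mul, integral_add hf hg, mul_add]

theorem bargmannTransform_const_mul (c : ℂ) (f : ℝ → ℂ) (z : ℂ) :
    bargmannTransform (fun t => c * f t) z = c * bargmannTransform f z := by
  rw [bargmannTransform_eq_integral, bargmannTransform_eq_integral, mul_left_comm c,
    ← integral_const_mul c]
  simp only [mul_assoc]

lemma cosh_add_mul_sinh (w : ℂ) (x : ℝ) :
    (Real.cosh x : ℂ) + w * Real.sinh x = (1 + w) / 2 * cexp x + (1 - w) / 2 * cexp (-x) := by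
  rw [Real.cosh_eq, Real.sinh_eq]
  push_cast
  ring

theorem bargmannTransform_normGaussian_mul_cosh_add_mul_sinh (w : ℂ) (β : ℝ) (z : ℂ) :
    bargmannTransform
        (fun t => normGaussian t * ((Real.cosh (β * t) : ℂ) + w * Real.sinh (β * t))) z =
      cexp (β ^ 2 / (8 * π)) / 2 * ((1 - w) + (1 + w) * cexp (β * z)) * cexp (-(β * z) / 2) := by
  have eq_sum : (fun t => normGaussian t * ((Real.cosh (β * t) : ℂ) + w * Real.sinh (β * t))) =
      (fun t : ℝ => (1 + w) / 2 * (normGaussian t * cexp ((β : ℂ) * t))) +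
        fun t : ℝ => (1 - w) / 2 * (normGaussian t * cexp (-(β : ℂ) * t)) := by
    ext t
    rw [Pi.add_apply, cosh_add_mul_sinh]
    push_cast
    rw [neg_mul]
    ring
  have integrable (b c : ℂ) :
      Integrable fun t => c * (normGaussian t * cexp (b * t)) * bargmannKernel z t := by
    simpa only [mul_assoc] using
      (integrable_normGaussian_mul_cexp_mul_bargmannKernel b z).const_mul c
  rw [eq_sum, bargmannTransform_add (integrable _ _) (integrable _ _), bargmannTransform_const_mul,
    bargmannTransform_const_mul, bargmannTransform_normGaussian_mul_cexp,
    bargmannTransform_normGaussian_mul_cexp,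
    show (β : ℂ) * z / 2 + β ^ 2 / (8 * π) = β ^ 2 / (8 * π) + β * z + -(β * z) / 2 by ring,
    show -(β : ℂ) * z / 2 + (-β) ^ 2 / (8 * π) = β ^ 2 / (8 * π) + -(β * z) / 2 by ring]
  simp only [Complex.exp_add]
  ring

theorem bargmann_hPlus_hMinus_general (a : ℝ) :
    ∃ c : ℂ, c ≠ 0 ∧
      (∀ z : ℂ, bargmannTransform (hPlus a) z =
        c * ((1 - Complex.I) + (1 + Complex.I) * Complex.exp ((Real.pi : ℂ) * z / a)) *
          Complex.exp (-(Real.pi : ℂ) * z / (2 * a))) ∧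
      (∀ z : ℂ, bargmannTransform (hMinus a) z =
        c * ((1 + Complex.I) + (1 - Complex.I) * Complex.exp ((Real.pi : ℂ) * z / a)) *
          Complex.exp (-(Real.pi : ℂ) * z / (2 * a))) := by
  have hPlus_eq : hPlus a =
      fun t => normGaussian t * ((Real.cosh (π / a * t) : ℂ) + I * Real.sinh (π / a * t)) := by
    ext t
    rw [hPlus, mul_div_right_comm]
  have hMinus_eq : hMinus a =
      fun t => normGaussian t * ((Real.cosh (π / a * t) : ℂ) + -I * Real.sinh (π / a * t)) := by
    ext t
    rw [hMinus, mul_div_right_comm, neg_mul, ← sub_eq_add_neg]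
  have exponent (z : ℂ) : ((π / a : ℝ) : ℂ) * z = π * z / a := by push_cast; ring
  have half (z : ℂ) : -(π * z / a) / 2 = -π * z / (2 * a) := by ring
  refine ⟨cexp (((π / a : ℝ) : ℂ) ^ 2 / (8 * π)) / 2,
    div_ne_zero (Complex.exp_ne_zero _) two_ne_zero, fun z => ?_, fun z => ?_⟩
  · rw [hPlus_eq, bargmannTransform_normGaussian_mul_cosh_add_mul_sinh, exponent, half]
  · rw [hMinus_eq, bargmannTransform_normGaussian_mul_cosh_add_mul_sinh, exponent, half,
      sub_neg_eq_add, ← sub_eq_add_neg]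

/-- There is a nonzero constant `c` (depending only on `a`) such that
`Bh^±(z) = c (1 ∓ i + (1 ± i) e^{πz/a}) e^{-πz/(2a)}` for all `z ∈ ℂ`. -/
theorem bargmann_hPlus_hMinus (a : ℝ) (ha : 0 < a) :
    ∃ c : ℂ, c ≠ 0 ∧
      (∀ z : ℂ, bargmannTransform (hPlus a) z =
        c * ((1 - Complex.I) + (1 + Complex.I) * Complex.exp ((Real.pi : ℂ) * z / a)) *
          Complex.exp (-(Real.pi : ℂ) * z / (2 * a))) ∧
      (∀ z : ℂ, bargmannTransform (hMinus a) z =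
        c * ((1 + Complex.I) + (1 - Complex.I) * Complex.exp ((Real.pi : ℂ) * z / a)) *
          Complex.exp (-(Real.pi : ℂ) * z / (2 * a))) :=
  bargmann_hPlus_hMinus_general a
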